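/- arXiv:0903.2869 — 4 statements merged into one kernel-verified Lean document; each statement's English description precedes it below -/
import Mathlib

section
/- Let k ≥ s ≥ 0 and p ≥ 0. For each m with −1 ≤ m ≤ k − s, the number of lattice paths with k upsteps and s downsteps that visit height m from above exactly p times is the same; i.e., this count is independent of m in that range. -/
/-!
For `0 ≤ c ≤ k - s` every path reaches height `c`. Reflecting the segment between its first and
its last visit to `c` in the line at height `c` is an involution that keeps the number of upsteps,
and it turns the up-crossings `c → c + 1` of that segment into the visits to `c - 1` from above.
Up to its last visit to `c`, a path starting at `0 ≤ c` crosses `c` upwards as often as downwards,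
and all its visits to `c` from above happen there. Hence the reflection matches the paths visiting
`c` from above `p` times with those visiting `c - 1` from above `p` times, and induction on `m`
starting at `-1` gives the theorem.
-/

/-- The height of a lattice path after `r` steps, where the path is encoded as
`p : Fin n → Bool` (`true` = upstep `+1`, `false` = downstep `-1`) and starts at height `0`. -/
def height {n : ℕ} (p : Fin n → Bool) (r : ℕ) : ℤ :=
  ∑ i ∈ Finset.univ.filter (fun i : Fin n => (i : ℕ) < r), (if p i then (1 : ℤ) else -1)

/-- The number of upsteps of a lattice path. -/
def upSteps {n : ℕ} (p : Fin n → Bool) : ℕ :=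
  (Finset.univ.filter (fun i => p i = true)).card

/-- The number of times the path `p` visits height `m` from above, i.e. the number of
times `r` such that the height after `r` steps is `m` and the `r`-th step is a downstep
(equivalently, the height after `r - 1` steps is `m + 1`). -/
def visitsFromAbove {n : ℕ} (p : Fin n → Bool) (m : ℤ) : ℕ :=
  ((Finset.Icc 1 n).filter (fun r => height p r = m ∧ height p (r - 1) = m + 1)).card

namespace LatticePath

open Finset

section Crossings

variable (h : ℕ → ℤ) (c : ℤ) (N : ℕ)

def upCrossings : Finset ℕ :=
  (range N).filter fun i => h i = c ∧ h (i + 1) = c + 1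

def downCrossings : Finset ℕ :=
  (range N).filter fun i => h i = c + 1 ∧ h (i + 1) = c

variable {h c N}

theorem exists_eq_of_le_of_le (hstep : ∀ r, h (r + 1) ≤ h r + 1) {a b : ℕ} (hab : a ≤ b)
    (ha : h a ≤ c) (hb : c ≤ h b) : ∃ r, a ≤ r ∧ r ≤ b ∧ h r = c := by
  induction b, hab using Nat.le_induction with
  | base => exact ⟨a, le_rfl, le_rfl, le_antisymm ha hb⟩
  | succ b hab ih =>
    by_cases hcb : c ≤ h b
    · obtain ⟨r, har, hrb, hr⟩ := ih hcb
      exact ⟨r, har, hrb.trans b.le_succ, hr⟩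
    · exact ⟨b + 1, by omega, le_rfl, by linarith [hstep b]⟩

/-- Each up-crossing of `c` raises the indicator of `c < h i` by one and each down-crossing
lowers it by one, so the difference of the counts telescopes. -/
theorem card_upCrossings_eq_card_downCrossings (hstep : ∀ r, |h (r + 1) - h r| ≤ 1)
    (h0 : h 0 ≤ c) (hN : h N = c) :
    #(upCrossings h c N) = #(downCrossings h c N) := by
  have hind : ∀ i, ((if h i = c ∧ h (i + 1) = c + 1 then 1 else 0)
      - (if h i = c + 1 ∧ h (i + 1) = c then 1 else 0) : ℤ)
      = (if c < h (i + 1) then 1 else 0) - (if c < h i then 1 else 0) := by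
    intro i
    have := abs_le.mp (hstep i)
    split_ifs <;> omega
  have htele := sum_range_sub (fun i => if c < h i then (1 : ℤ) else 0) N
  simp only [← hind, hN, lt_irrefl, not_lt.mpr h0, if_false, sub_zero,
    sum_sub_distrib, sum_boole] at htele
  exact_mod_cast sub_eq_zero.mp htele

end Crossings

variable {n : ℕ}

def step (q : Fin n → Bool) (r : ℕ) : ℤ :=
  if hr : r < n then (if q ⟨r, hr⟩ then 1 else -1) else 0

theorem height_zero (q : Fin n → Bool) : height q 0 = 0 := by
  simp [height]

theorem height_succ (q : Fin n → Bool) (r : ℕ) :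
    height q (r + 1) = height q r + step q r := by
  unfold height step
  by_cases hr : r < n
  · have hins : univ.filter (fun i : Fin n => (i : ℕ) < r + 1)
        = insert ⟨r, hr⟩ (univ.filter fun i : Fin n => (i : ℕ) < r) := by
      ext i
      simp only [mem_filter, mem_univ, true_and, mem_insert, Fin.ext_iff]
      omega
    rw [hins, sum_insert (by simp), dif_pos hr, add_comm]
  · have hsame : univ.filter (fun i : Fin n => (i : ℕ) < r + 1)
        = univ.filter fun i : Fin n => (i : ℕ) < r := by
      ext i
      simp only [mem_filter, mem_univ, true_and]
      omega
    rw [hsame, dif_neg hr, add_zero]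

theorem abs_height_succ_sub_le (q : Fin n → Bool) (r : ℕ) :
    |height q (r + 1) - height q r| ≤ 1 := by
  rw [height_succ, add_sub_cancel_left, step]
  split_ifs <;> simp

theorem height_succ_le (q : Fin n → Bool) (r : ℕ) : height q (r + 1) ≤ height q r + 1 := by
  linarith [(abs_le.mp (abs_height_succ_sub_le q r)).2]

theorem height_last (q : Fin n → Bool) : height q n = 2 * (upSteps q : ℤ) - n := by
  have hall : univ.filter (fun i : Fin n => (i : ℕ) < n) = univ := by
    ext i
    simp
  have hterm : ∀ i, (if q i then 1 else -1 : ℤ) = 2 * (if q i = true then 1 else 0) - 1 := by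
    intro i
    cases q i <;> rfl
  rw [height, hall, upSteps, natCast_card_filter, mul_sum]
  simp only [hterm, sum_sub_distrib, sum_const, card_univ, Fintype.card_fin, nsmul_eq_mul,
    mul_one]

theorem visitsFromAbove_eq_card_downCrossings (q : Fin n → Bool) (m : ℤ) :
    visitsFromAbove q m = #(downCrossings (height q) m n) := by
  rw [visitsFromAbove, downCrossings]
  refine card_nbij' (· - 1) (· + 1) ?_ ?_ ?_ ?_
  · intro r hr
    simp only [coe_filter, mem_Icc, Set.mem_ofPred_eq, mem_range] at hr ⊢
    obtain ⟨⟨hr1, hrn⟩, hrm, hrm'⟩ := hr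
    refine ⟨by omega, hrm', ?_⟩
    rwa [Nat.sub_add_cancel hr1]
  · intro i hi
    simp only [coe_filter, mem_Icc, Set.mem_ofPred_eq, mem_range, Nat.add_sub_cancel] at hi ⊢
    exact ⟨⟨by omega, by omega⟩, hi.2.2, hi.2.1⟩
  · intro r hr
    simp only [coe_filter, mem_Icc, Set.mem_ofPred_eq] at hr
    exact Nat.sub_add_cancel hr.1.1
  · intro i _
    exact Nat.add_sub_cancel i 1

section Reflection

variable (q : Fin n → Bool) (c : ℤ)

def HitsBy (r : ℕ) : Prop :=
  ∃ a ≤ r, height q a = c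

def HitsFrom (r : ℕ) : Prop :=
  ∃ b, r ≤ b ∧ b ≤ n ∧ height q b = c

def BetweenHits (r : ℕ) : Prop :=
  HitsBy q c r ∧ HitsFrom q c r

open Classical in
/-- The path whose segment between its first and its last visit to height `c` is reflected
in that height. -/
noncomputable def reflect : Fin n → Bool :=
  fun i => if BetweenHits q c i ∧ BetweenHits q c (i + 1) then !q i else q i

variable {q c}

theorem hitsBy_succ {r : ℕ} : HitsBy q c (r + 1) ↔ HitsBy q c r ∨ height q (r + 1) = c := by
  constructor
  · rintro ⟨a, ha, hac⟩
    rcases Nat.le_succ_iff.mp ha with ha | rfl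
    · exact Or.inl ⟨a, ha, hac⟩
    · exact Or.inr hac
  · rintro (⟨a, ha, hac⟩ | hc)
    · exact ⟨a, ha.trans r.le_succ, hac⟩
    · exact ⟨r + 1, le_rfl, hc⟩

theorem hitsFrom_iff {r : ℕ} :
    HitsFrom q c r ↔ (r ≤ n ∧ height q r = c) ∨ HitsFrom q c (r + 1) := by
  constructor
  · rintro ⟨b, hrb, hbn, hbc⟩
    rcases hrb.eq_or_lt with rfl | hrb
    · exact Or.inl ⟨hbn, hbc⟩
    · exact Or.inr ⟨b, hrb, hbn, hbc⟩
  · rintro (⟨hrn, hrc⟩ | ⟨b, hrb, hbn, hbc⟩)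
    · exact ⟨r, le_rfl, hrn, hrc⟩
    · exact ⟨b, r.le_succ.trans hrb, hbn, hbc⟩

open Classical in
theorem step_reflect (r : ℕ) : step (reflect q c) r =
    if BetweenHits q c r ∧ BetweenHits q c (r + 1) then -step q r else step q r := by
  unfold step reflect
  by_cases hr : r < n
  · simp only [dif_pos hr]
    split_ifs <;> simp_all
  · simp only [dif_neg hr, neg_zero, ite_self]

open Classical in
theorem height_reflect (r : ℕ) :
    height (reflect q c) r = if BetweenHits q c r then 2 * c - height q r else height q r := by
  induction r with
  | zero =>
    rw [height_zero, height_zero]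
    split_ifs with h0
    · obtain ⟨⟨a, ha, hac⟩, -⟩ := h0
      rw [Nat.le_zero.mp ha, height_zero] at hac
      omega
    · rfl
  | succ r ih =>
    have hA := hitsBy_succ (q := q) (c := c) (r := r)
    have hB := hitsFrom_iff (q := q) (c := c) (r := r)
    have hs := height_succ q r
    rw [hs, height_succ, ih, step_reflect]
    by_cases h0 : BetweenHits q c r <;> by_cases h1 : BetweenHits q c (r + 1)
    · rw [if_pos h0, if_pos ⟨h0, h1⟩, if_pos h1]
      ring
    · have hrc : height q r = c := by unfold BetweenHits at h0 h1; tauto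
      rw [if_pos h0, if_neg (fun h => h1 h.2), if_neg h1]
      linarith
    · have hrc : height q (r + 1) = c := by unfold BetweenHits at h0 h1; tauto
      rw [if_neg h0, if_neg (fun h => h0 h.1), if_pos h1]
      linarith
    · rw [if_neg h0, if_neg (fun h => h0 h.1), if_neg h1]

theorem height_reflect_eq_iff {r : ℕ} : height (reflect q c) r = c ↔ height q r = c := by
  rw [height_reflect]
  split_ifs <;> omega

theorem betweenHits_reflect {r : ℕ} : BetweenHits (reflect q c) c r ↔ BetweenHits q c r := by
  simp only [BetweenHits, HitsBy, HitsFrom, height_reflect_eq_iff]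

open Classical in
theorem reflect_reflect : reflect (reflect q c) c = q := by
  funext i
  change (if BetweenHits (reflect q c) c i ∧ BetweenHits (reflect q c) c (i + 1)
    then !reflect q c i else reflect q c i) = q i
  simp only [betweenHits_reflect, reflect]
  split_ifs <;> simp

theorem height_reflect_last : height (reflect q c) n = height q n := by
  rw [height_reflect]
  split_ifs with h
  · obtain ⟨-, b, hnb, hbn, hbc⟩ := h
    rw [le_antisymm hbn hnb] at hbc
    omega
  · rfl

theorem upSteps_reflect : upSteps (reflect q c) = upSteps q := by
  have h := height_reflect_last (q := q) (c := c)
  rw [height_last, height_last] at h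
  omega

theorem visitsFromAbove_reflect (hc : 0 ≤ c) (hcn : c ≤ height q n) :
    visitsFromAbove (reflect q c) (c - 1) = visitsFromAbove q c := by
  obtain ⟨t₀, -, ht₀n, ht₀⟩ := exists_eq_of_le_of_le (height_succ_le q) n.zero_le
    (by rwa [height_zero]) hcn
  set t := Nat.findGreatest (fun r => height q r = c) n
  have ht : height q t = c := Nat.findGreatest_spec (P := fun r => height q r = c) ht₀n ht₀
  have htn : t ≤ n := Nat.findGreatest_le n
  have hlast : ∀ r ≤ n, height q r = c → r ≤ t := fun r hr hrc => Nat.le_findGreatest hr hrc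
  have hfrom : ∀ r, HitsFrom q c r ↔ r ≤ t :=
    fun r => ⟨fun ⟨b, hrb, hbn, hbc⟩ => hrb.trans (hlast b hbn hbc), fun hrt => ⟨t, hrt, htn, ht⟩⟩
  have hdown : downCrossings (height q) c n = downCrossings (height q) c t := by
    ext i
    simp only [downCrossings, mem_filter, mem_range]
    constructor
    · rintro ⟨hin, hi, hi1⟩
      exact ⟨hlast (i + 1) hin hi1, hi, hi1⟩
    · rintro ⟨hit, hi, hi1⟩
      exact ⟨hit.trans_le htn, hi, hi1⟩
  -- A down-crossing of `c - 1` by the reflected path starts at a visit to `c`; the next step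
  -- cannot leave the reflected segment, since the path still has to climb back to `c`.
  have hdown_reflect : downCrossings (height (reflect q c)) (c - 1) n
      = upCrossings (height q) c t := by
    ext i
    simp only [downCrossings, upCrossings, mem_filter, mem_range, sub_add_cancel,
      height_reflect_eq_iff]
    constructor
    · rintro ⟨hin, hi, hi1⟩
      by_cases hit : i + 1 ≤ t
      · have hbetween : BetweenHits q c (i + 1) := ⟨⟨i, i.le_succ, hi⟩, (hfrom _).mpr hit⟩
        rw [height_reflect, if_pos hbetween] at hi1
        exact ⟨hit, hi, by linarith⟩
      · rw [height_reflect, if_neg fun h => hit ((hfrom _).mp h.2)] at hi1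
        obtain ⟨r, hir, hrn, hrc⟩ := exists_eq_of_le_of_le (height_succ_le q) hin
          (by linarith) hcn
        exact absurd (hlast r hrn hrc) (by omega)
    · rintro ⟨hit, hi, hi1⟩
      have hbetween : BetweenHits q c (i + 1) := ⟨⟨i, i.le_succ, hi⟩, (hfrom _).mpr hit⟩
      rw [height_reflect, if_pos hbetween]
      exact ⟨by omega, hi, by linarith⟩
  rw [visitsFromAbove_eq_card_downCrossings, visitsFromAbove_eq_card_downCrossings,
    hdown_reflect, hdown, card_upCrossings_eq_card_downCrossings (abs_height_succ_sub_le q)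
      (by rwa [height_zero]) ht]

end Reflection

def pathsWithVisitsFromAbove (k s : ℕ) (m : ℤ) (p : ℕ) : Finset (Fin (k + s) → Bool) :=
  univ.filter fun q => upSteps q = k ∧ visitsFromAbove q m = p

theorem card_pathsWithVisitsFromAbove_sub_one (k s p : ℕ) {c : ℤ} (hc : 0 ≤ c)
    (hck : c ≤ (k : ℤ) - s) :
    #(pathsWithVisitsFromAbove k s (c - 1) p) = #(pathsWithVisitsFromAbove k s c p) := by
  refine card_bijective (reflect · c) (Function.Involutive.bijective fun _ => reflect_reflect)
    fun q => ?_
  simp only [pathsWithVisitsFromAbove, mem_filter, mem_univ, true_and, upSteps_reflect]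
  refine and_congr_right fun hq => ?_
  have hcn : c ≤ height (reflect q c) (k + s) := by
    rw [height_last, upSteps_reflect, hq]
    push_cast
    linarith
  rw [← visitsFromAbove_reflect hc hcn, reflect_reflect]

theorem card_pathsWithVisitsFromAbove_eq_neg_one (k s p : ℕ) {m : ℤ} (hm : -1 ≤ m)
    (hmk : m ≤ (k : ℤ) - s) :
    #(pathsWithVisitsFromAbove k s m p) = #(pathsWithVisitsFromAbove k s (-1) p) := by
  induction m, hm using Int.leInduction with
  | base => rfl
  | succ m hm ih =>
    rw [← ih (by linarith), ← card_pathsWithVisitsFromAbove_sub_one k s p (by linarith) hmk,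
      add_sub_cancel_right]

end LatticePath

theorem stmt_3_general (k s p : ℕ) (m₁ m₂ : ℤ)
    (hm₁ : -1 ≤ m₁) (hm₁' : m₁ ≤ (k : ℤ) - s)
    (hm₂ : -1 ≤ m₂) (hm₂' : m₂ ≤ (k : ℤ) - s) :
    (Finset.univ.filter (fun q : Fin (k + s) → Bool =>
        upSteps q = k ∧ visitsFromAbove q m₁ = p)).card =
      (Finset.univ.filter (fun q : Fin (k + s) → Bool =>
        upSteps q = k ∧ visitsFromAbove q m₂ = p)).card :=
  (LatticePath.card_pathsWithVisitsFromAbove_eq_neg_one k s p hm₁ hm₁').trans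
    (LatticePath.card_pathsWithVisitsFromAbove_eq_neg_one k s p hm₂ hm₂').symm

/-- Let `k ≥ s` and `p ≥ 0`. For `−1 ≤ m ≤ k − s`, the number of lattice
paths with `k` upsteps and `s` downsteps that visit height `m` from above exactly `p`
times is independent of `m` in that range. -/
theorem stmt_3 (k s p : ℕ) (hks : s ≤ k) (m₁ m₂ : ℤ)
    (hm₁ : -1 ≤ m₁) (hm₁' : m₁ ≤ (k : ℤ) - s)
    (hm₂ : -1 ≤ m₂) (hm₂' : m₂ ≤ (k : ℤ) - s) :
    (Finset.univ.filter (fun q : Fin (k + s) → Bool =>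
        upSteps q = k ∧ visitsFromAbove q m₁ = p)).card =
      (Finset.univ.filter (fun q : Fin (k + s) → Bool =>
        upSteps q = k ∧ visitsFromAbove q m₂ = p)).card :=
  stmt_3_general k s p m₁ m₂ hm₁ hm₁' hm₂ hm₂'
end

section
/- Let k ≥ s ≥ 0. The total number of visits to height −1 from above, summed over all C(k+s, s) lattice paths with k upsteps and s downsteps, equals the sum over r from 0 to s−1 of C(k+s, r). -/
lemma height_eq_sum {n : ℕ} (p : Fin n → Bool) (r : ℕ) :
    height p r = ∑ i : Fin n, if (i : ℕ) < r then (if p i then (1 : ℤ) else -1) else 0 := by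
  rw [height, Finset.sum_filter]

lemma height_snoc_of_le {n : ℕ} (p : Fin n → Bool) (b : Bool) {r : ℕ} (hr : r ≤ n) :
    height (Fin.snoc p b) r = height p r := by
  rw [height_eq_sum, height_eq_sum, Fin.sum_univ_castSucc]
  simp only [Fin.snoc_castSucc, Fin.coe_castSucc, Fin.snoc_last, Fin.val_last]
  rw [if_neg (by omega)]
  simp

lemma height_snoc_top {n : ℕ} (p : Fin n → Bool) (b : Bool) :
    height (Fin.snoc p b) (n + 1) = height p n + (if b then (1:ℤ) else -1) := by
  rw [height_eq_sum, height_eq_sum, Fin.sum_univ_castSucc]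
  simp only [Fin.snoc_castSucc, Fin.coe_castSucc, Fin.snoc_last, Fin.val_last]
  rw [if_pos (Nat.lt_succ_self n)]
  congr 1
  apply Finset.sum_congr rfl
  intro i _
  rw [if_pos (by omega), if_pos i.isLt]

lemma upSteps_snoc {n : ℕ} (p : Fin n → Bool) (b : Bool) :
    upSteps (Fin.snoc p b) = upSteps p + (if b then 1 else 0) := by
  rw [upSteps, upSteps, Finset.card_filter, Finset.card_filter, Fin.sum_univ_castSucc]
  simp [Fin.snoc_castSucc, Fin.snoc_last]

lemma height_top {n : ℕ} (p : Fin n → Bool) :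
    height p n = 2 * (upSteps p : ℤ) - n := by
  rw [height_eq_sum]
  have : ∀ i : Fin n, (if (i : ℕ) < n then (if p i then (1 : ℤ) else -1) else 0)
      = 2 * (if p i then (1:ℤ) else 0) - 1 := by
    intro i
    rw [if_pos i.isLt]
    by_cases h : p i <;> simp [h]
  rw [Finset.sum_congr rfl (fun i _ => this i)]
  rw [Finset.sum_sub_distrib, ← Finset.mul_sum]
  have : (upSteps p : ℤ) = ∑ i : Fin n, (if p i then (1:ℤ) else 0) := by
    rw [upSteps, Finset.card_filter]
    push_cast
    simp
  rw [← this]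
  simp [mul_comm]

lemma Icc_one_succ (n : ℕ) : Finset.Icc 1 (n+1) = insert (n+1) (Finset.Icc 1 n) := by
  ext x
  simp [Finset.mem_Icc, Finset.mem_insert]
  omega

lemma visits_snoc {n : ℕ} (p : Fin n → Bool) (b : Bool) :
    visitsFromAbove (Fin.snoc p b) (-1) =
      visitsFromAbove p (-1) + (if b = false ∧ height p n = 0 then 1 else 0) := by
  rw [visitsFromAbove, visitsFromAbove, Icc_one_succ, Finset.filter_insert]
  have hfilt : (Finset.Icc 1 n).filter
        (fun r => height (Fin.snoc p b) r = -1 ∧ height (Fin.snoc p b) (r-1) = -1 + 1)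
      = (Finset.Icc 1 n).filter (fun r => height p r = -1 ∧ height p (r-1) = -1 + 1) := by
    apply Finset.filter_congr
    intro r hr
    rw [Finset.mem_Icc] at hr
    rw [height_snoc_of_le p b hr.2, height_snoc_of_le p b (by omega)]
  by_cases hc : height (Fin.snoc p b) (n+1) = -1 ∧ height (Fin.snoc p b) (n+1-1) = -1 + 1
  · rw [if_pos hc, hfilt, Finset.card_insert_of_notMem (by simp)]
    have h2 : height p n = 0 := by
      have := hc.2
      rw [Nat.add_sub_cancel, height_snoc_of_le p b le_rfl] at this
      omega
    have hb : b = false := by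
      have := hc.1
      rw [height_snoc_top] at this
      cases b
      · rfl
      · simp at this; omega
    rw [if_pos ⟨hb, h2⟩, add_comm]
  · rw [if_neg hc, hfilt]
    have : ¬ (b = false ∧ height p n = 0) := by
      intro ⟨hb, h0⟩
      apply hc
      constructor
      · rw [height_snoc_top, hb, h0]; norm_num
      · rw [Nat.add_sub_cancel, height_snoc_of_le p b le_rfl, h0]; norm_num
    rw [if_neg this, add_zero]

lemma card_upSteps (n k : ℕ) :
    (Finset.univ.filter (fun p : Fin n → Bool => upSteps p = k)).card = n.choose k := by
  have := Finset.card_powersetCard k (Finset.univ : Finset (Fin n))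
  rw [Finset.card_univ, Fintype.card_fin] at this
  rw [← this]
  apply Finset.card_bij (fun p _ => Finset.univ.filter (fun i => p i = true))
  · intro p hp
    rw [Finset.mem_filter] at hp
    rw [Finset.mem_powersetCard]
    exact ⟨Finset.filter_subset _ _ |>.trans (by simp), hp.2⟩
  · intro p hp q hq h
    funext i
    have : (i ∈ Finset.univ.filter (fun i => p i = true)) ↔
        (i ∈ Finset.univ.filter (fun i => q i = true)) := by rw [h]
    simp only [Finset.mem_filter, Finset.mem_univ, true_and] at this
    cases hpi : p i <;> cases hqi : q i <;> simp_all
  · intro S hS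
    rw [Finset.mem_powersetCard] at hS
    refine ⟨fun i => decide (i ∈ S), ?_, ?_⟩
    · rw [Finset.mem_filter]
      constructor
      · exact Finset.mem_univ _
      · rw [upSteps]
        rw [← hS.2]
        congr 1
        ext i
        simp
    · ext i
      simp

def F (n k : ℕ) : ℕ :=
  ∑ q ∈ Finset.univ.filter (fun q : Fin n → Bool => upSteps q = k), visitsFromAbove q (-1)

def G (n k : ℕ) : ℕ := ∑ i ∈ Finset.range (min (n - k) (k + 1)), n.choose i

lemma F_eq_sum (n k : ℕ) :
    F n k = ∑ q : Fin n → Bool, if upSteps q = k then visitsFromAbove q (-1) else 0 := by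
  rw [F, Finset.sum_filter]

lemma F_succ_sum (n k : ℕ) :
    F (n+1) k = ∑ p : Fin n → Bool, ∑ b : Bool,
      (if upSteps p + (if b then 1 else 0) = k then
        visitsFromAbove p (-1) + (if b = false ∧ height p n = 0 then 1 else 0) else 0) := by
  rw [F_eq_sum]
  rw [← Equiv.sum_comp (Fin.snocEquiv (fun _ => Bool))
    (fun q => if upSteps q = k then visitsFromAbove q (-1) else 0)]
  rw [Fintype.sum_prod_type]
  rw [Finset.sum_comm]
  apply Finset.sum_congr rfl
  intro p _
  apply Finset.sum_congr rfl
  intro b _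
  have hsnoc : (Fin.snocEquiv (fun _ => Bool)) (b, p) = Fin.snoc p b := rfl
  rw [hsnoc, upSteps_snoc, visits_snoc]

lemma height_zero_iff {n k : ℕ} {p : Fin n → Bool} (h : upSteps p = k) :
    height p n = 0 ↔ n = 2 * k := by
  rw [height_top, h]
  omega

lemma sum_indicator_eq (n k : ℕ) :
    (∑ p : Fin n → Bool, if upSteps p = k ∧ n = 2*k then 1 else 0)
      = if n = 2*k then n.choose k else 0 := by
  by_cases h : n = 2*k
  · rw [if_pos h, ← card_upSteps n k, Finset.card_filter]
    apply Finset.sum_congr rfl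
    intro p _
    simp [h]
  · simp [h]

lemma F_succ_succ (n k : ℕ) :
    F (n+1) (k+1) = F n (k+1) + (if n = 2*(k+1) then n.choose (k+1) else 0) + F n k := by
  rw [F_succ_sum]
  have key : ∀ p : Fin n → Bool, (∑ b : Bool,
      (if upSteps p + (if b then 1 else 0) = k+1 then
        visitsFromAbove p (-1) + (if b = false ∧ height p n = 0 then 1 else 0) else 0))
      = ((if upSteps p = k+1 then visitsFromAbove p (-1) else 0)
          + (if upSteps p = k+1 ∧ n = 2*(k+1) then 1 else 0))
        + (if upSteps p = k then visitsFromAbove p (-1) else 0) := by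
    intro p
    rw [Fintype.sum_bool]
    simp only [reduceIte, Bool.true_eq_false, Bool.false_eq_true, false_and, if_false,
      add_zero, eq_self_iff_true, true_and]
    rw [add_comm]
    congr 1
    · -- b = false part
      by_cases h : upSteps p = k+1
      · rw [if_pos h, if_pos h]
        by_cases h0 : height p n = 0
        · rw [if_pos h0, if_pos ⟨h, (height_zero_iff h).mp h0⟩]
        · rw [if_neg h0, if_neg (fun hc => h0 ((height_zero_iff h).mpr hc.2)), add_zero]
      · rw [if_neg h, if_neg h, if_neg (by tauto), add_zero]
    · -- b = true part
      by_cases h : upSteps p = k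
      · rw [if_pos (by omega), if_pos h]
      · rw [if_neg (by omega), if_neg h]
  rw [Finset.sum_congr rfl (fun p _ => key p)]
  rw [Finset.sum_add_distrib, Finset.sum_add_distrib, sum_indicator_eq, ← F_eq_sum, ← F_eq_sum]

lemma F_succ_zero (n : ℕ) :
    F (n+1) 0 = F n 0 + (if n = 0 then 1 else 0) := by
  rw [F_succ_sum]
  have key : ∀ p : Fin n → Bool, (∑ b : Bool,
      (if upSteps p + (if b then 1 else 0) = 0 then
        visitsFromAbove p (-1) + (if b = false ∧ height p n = 0 then 1 else 0) else 0))
      = (if upSteps p = 0 then visitsFromAbove p (-1) else 0)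
          + (if upSteps p = 0 ∧ n = 2*0 then 1 else 0) := by
    intro p
    rw [Fintype.sum_bool]
    simp only [reduceIte, Bool.true_eq_false, Bool.false_eq_true, false_and, if_false,
      add_zero, eq_self_iff_true, true_and]
    rw [if_neg (by omega), zero_add]
    by_cases h : upSteps p = 0
    · rw [if_pos h, if_pos h]
      by_cases h0 : height p n = 0
      · rw [if_pos h0, if_pos ⟨h, (height_zero_iff h).mp h0⟩]
      · rw [if_neg h0, if_neg (fun hc => h0 ((height_zero_iff h).mpr hc.2)), add_zero]
    · rw [if_neg h, if_neg h, if_neg (by tauto), add_zero]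
  rw [Finset.sum_congr rfl (fun p _ => key p)]
  rw [Finset.sum_add_distrib, sum_indicator_eq, ← F_eq_sum]
  simp

lemma sum_choose_succ (n t : ℕ) :
    ∑ i ∈ Finset.range t, (n+1).choose i
      = ∑ i ∈ Finset.range t, n.choose i + ∑ i ∈ Finset.range (t-1), n.choose i := by
  cases t with
  | zero => simp
  | succ t =>
    rw [Finset.sum_range_succ', Nat.add_sub_cancel,
      Finset.sum_range_succ' (fun i => n.choose i) t]
    simp only [Nat.choose_succ_succ, Nat.choose_zero_right, Nat.succ_eq_add_one]
    rw [Finset.sum_add_distrib]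
    ring

lemma G_succ_zero (n : ℕ) : G (n+1) 0 = G n 0 + (if n = 0 then 1 else 0) := by
  rw [G, G]
  rcases n with _ | n
  · simp
  · simp [Nat.succ_sub_one]

lemma G_succ_succ (n k : ℕ) :
    G (n+1) (k+1) = G n (k+1) + (if n = 2*(k+1) then n.choose (k+1) else 0) + G n k := by
  rw [G, G, G]
  rcases lt_trichotomy n (2*k+2) with h | h | h
  · -- n ≤ 2k+1 : indicator off
    rw [if_neg (by omega)]
    have e1 : min (n + 1 - (k+1)) (k + 1 + 1) = n - k := by omega
    have e2 : min (n - (k+1)) (k + 1 + 1) = (n - k) - 1 := by omega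
    have e3 : min (n - k) (k + 1) = n - k := by omega
    rw [e1, e2, e3, add_zero, add_comm (∑ i ∈ Finset.range (n-k-1), n.choose i)]
    exact sum_choose_succ n (n-k)
  · -- n = 2k+2
    rw [if_pos (by omega)]
    have e1 : min (n + 1 - (k+1)) (k + 1 + 1) = k + 2 := by omega
    have e2 : min (n - (k+1)) (k + 1 + 1) = k + 1 := by omega
    have e3 : min (n - k) (k + 1) = k + 1 := by omega
    rw [e1, e2, e3]
    rw [sum_choose_succ n (k+2)]
    have : ∑ i ∈ Finset.range (k+2), n.choose i
        = ∑ i ∈ Finset.range (k+1), n.choose i + n.choose (k+1) := by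
      rw [Finset.sum_range_succ]
    rw [this]
    have e4 : k + 2 - 1 = k + 1 := rfl
    rw [e4]
  · -- n ≥ 2k+3
    rw [if_neg (by omega)]
    have e1 : min (n + 1 - (k+1)) (k + 1 + 1) = k + 2 := by omega
    have e2 : min (n - (k+1)) (k + 1 + 1) = k + 2 := by omega
    have e3 : min (n - k) (k + 1) = k + 1 := by omega
    rw [e1, e2, e3, add_zero]
    rw [sum_choose_succ n (k+2)]
    have e4 : k + 2 - 1 = k + 1 := rfl
    rw [e4]

lemma F_eq_G (n : ℕ) : ∀ k, F n k = G n k := by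
  induction n with
  | zero =>
    intro k
    rw [G]
    simp only [Nat.zero_sub, Nat.min_def]
    have : F 0 k = 0 := by
      rw [F]
      apply Finset.sum_eq_zero
      intro q _
      rw [visitsFromAbove]
      simp
    rw [this]
    simp
  | succ n ih =>
    intro k
    cases k with
    | zero => rw [F_succ_zero, G_succ_zero, ih]
    | succ k => rw [F_succ_succ, G_succ_succ, ih, ih]

/-- For `k ≥ s ≥ 0`, the total number of visits to height `−1` from above,
summed over all lattice paths with `k` upsteps and `s` downsteps, equals
`∑_{r=0}^{s−1} C(k+s, r)`. -/
theorem stmt_4 (k s : ℕ) (hks : s ≤ k) :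
    ∑ q ∈ Finset.univ.filter (fun q : Fin (k + s) → Bool => upSteps q = k),
        visitsFromAbove q (-1) =
      ∑ r ∈ Finset.range s, (k + s).choose r := by
  have h1 : (∑ q ∈ Finset.univ.filter (fun q : Fin (k + s) → Bool => upSteps q = k),
      visitsFromAbove q (-1)) = F (k + s) k := rfl
  rw [h1, F_eq_G, G]
  have : min (k + s - k) (k + 1) = s := by omega
  rw [this]
end

section
/- Let k ≥ s ≥ 0. The expected number of visits to −1 from above of a uniformly random lattice path with k upsteps and s downsteps equals (1/C(k+s, s)) · Σ_{r=0}^{s−1} C(k+s, r). -/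
open Finset

theorem card_filter_bool_fun_eq_choose_mul_choose {α : Type*} [Fintype α] [DecidableEq α]
    {A B : Finset α} (hAB : Disjoint A B) (a b : ℕ) :
    #{q : α → Bool | #{i ∈ A | q i} = a ∧ #{i ∈ B | q i} = b ∧ ∀ i ∉ A ∪ B, q i = false} =
      (#A).choose a * (#B).choose b := by
  have filter_mem_union {S T : Finset α} (hS : S ⊆ A) (hT : T ⊆ B) :
      {i ∈ A | i ∈ S ∪ T} = S ∧ {i ∈ B | i ∈ S ∪ T} = T := by
    simp only [filter_mem_eq_inter, inter_union_distrib_left, inter_eq_right.mpr hS,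
      inter_eq_right.mpr hT, disjoint_iff_inter_eq_empty.mp (hAB.mono_right hT),
      disjoint_iff_inter_eq_empty.mp (hAB.symm.mono_right hS), union_empty, empty_union, and_self]
  rw [← card_powersetCard, ← card_powersetCard, ← card_product]
  refine card_nbij' (fun q => ({i ∈ A | q i}, {i ∈ B | q i}))
    (fun ST i => decide (i ∈ ST.1 ∪ ST.2)) ?_ ?_ ?_ ?_
  · intro q hq
    simp only [coe_filter, Set.mem_ofPred_eq, mem_univ, true_and] at hq
    simp [mem_powersetCard, filter_subset, hq.1, hq.2.1]
  · rintro ⟨S, T⟩ hST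
    simp only [mem_coe, mem_product, mem_powersetCard] at hST
    obtain ⟨⟨hS, rfl⟩, hT, rfl⟩ := hST
    obtain ⟨hSA, hTB⟩ := filter_mem_union hS hT
    simp only [coe_filter, Set.mem_ofPred_eq, mem_univ, true_and, decide_eq_true_eq, hSA, hTB]
    intro i hi
    simpa using fun h => hi (union_subset_union hS hT h)
  · intro q hq
    simp only [coe_filter, Set.mem_ofPred_eq, mem_univ, true_and] at hq
    funext i
    by_cases hA : i ∈ A
    · simp [hA]
    by_cases hB : i ∈ B
    · simp [hB]
    · simp [hA, hB, hq.2.2 i (by simp [hA, hB])]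
  · rintro ⟨S, T⟩ hST
    simp only [mem_coe, mem_product, mem_powersetCard] at hST
    simp only [decide_eq_true_eq, filter_mem_union hST.1.1 hST.2.1]

theorem height_eq_two_mul_card_sub {n : ℕ} (p : Fin n → Bool) {r : ℕ} (hr : r ≤ n) :
    height p r = 2 * #{i : Fin n | i < r ∧ p i} - r := by
  have step (i : Fin n) : (if p i then (1 : ℤ) else -1) = 2 * (if p i then 1 else 0) - 1 := by
    cases p i <;> norm_num
  simp only [height, step, sum_sub_distrib, ← mul_sum, sum_boole, sum_const, filter_filter,
    Fin.card_filter_val_lt, min_eq_right hr, nsmul_eq_mul, mul_one]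

theorem height_succ {n : ℕ} (p : Fin n → Bool) {r : ℕ} (hr : r < n) :
    height p (r + 1) = height p r + if p ⟨r, hr⟩ then 1 else -1 := by
  have : univ.filter (fun i : Fin n => (i : ℕ) < r + 1) =
      insert ⟨r, hr⟩ (univ.filter fun i : Fin n => (i : ℕ) < r) := by
    ext i
    simp only [mem_filter, mem_univ, true_and, mem_insert, Fin.ext_iff]
    omega
  rw [height, height, this, sum_insert (by simp), add_comm]

def visitingPaths (n k r : ℕ) : Finset (Fin n → Bool) :=
  {q | upSteps q = k ∧ height q r = -1 ∧ height q (r - 1) = 0}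

theorem card_visitingPaths_two_mul_add_one {n k j : ℕ} (hj : 2 * j < n) (hjk : j ≤ k) :
    #(visitingPaths n k (2 * j + 1)) =
      (2 * j).choose j * (n - 1 - 2 * j).choose (k - j) := by
  set m : Fin n := ⟨2 * j, hj⟩ with hm_def
  have hAB : Disjoint (Iio m) (Ioi m) := disjoint_left.mpr fun i hi hi' => by
    simp only [mem_Iio, mem_Ioi] at hi hi'; exact lt_asymm hi hi'
  have hm (i : Fin n) : i ∉ Iio m ∪ Ioi m ↔ i = m := by simp
  trans (#(Iio m)).choose j * (#(Ioi m)).choose (k - j)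
  swap
  · simp [m]
  refine Eq.trans (congrArg card ?_) (card_filter_bool_fun_eq_choose_mul_choose hAB j (k - j))
  ext q
  simp only [visitingPaths, Nat.add_sub_cancel, mem_filter, mem_univ, true_and,
    forall_congr' fun i => imp_congr_left (hm i), forall_eq]
  have h_height : height q (2 * j) = 2 * #{i ∈ Iio m | q i} - 2 * j := by
    have : ({i | i < 2 * j ∧ q i} : Finset (Fin n)) = {i ∈ Iio m | q i} := by
      ext i; simp [m, Fin.lt_def]
    rw [height_eq_two_mul_card_sub q hj.le, this]
    push_cast; ring
  have hup (hq : q m = false) : upSteps q = #{i ∈ Iio m | q i} + #{i ∈ Ioi m | q i} := by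
    rw [upSteps, ← card_union_of_disjoint (disjoint_filter_filter hAB), ← filter_union]
    congr 1
    ext i
    by_cases hi : i = m <;> simp_all
  rw [height_succ q hj, ← hm_def, h_height]
  cases hqm : q m
  · simp only [hup hqm, Bool.false_eq_true, if_false, and_true]
    constructor <;> intro h <;> omega
  · simp only [if_true, Bool.true_eq_false, and_false, iff_false]
    omega

theorem card_visitingPaths_eq_zero {k s r : ℕ} (hr : r ∈ Icc 1 (k + s))
    (hne : ∀ j < s, r ≠ 2 * j + 1) :
    #(visitingPaths (k + s) k r) = 0 := by
  rw [mem_Icc] at hr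
  obtain ⟨t, rfl | rfl⟩ := Nat.even_or_odd' r
  · refine card_eq_zero.mpr (filter_eq_empty_iff.mpr fun q _ ⟨_, _, h⟩ => ?_)
    rw [height_eq_two_mul_card_sub q (by omega)] at h
    omega
  · have hts : s ≤ t := by by_contra! h; exact hne t h rfl
    rw [card_visitingPaths_two_mul_add_one (by omega) (by omega),
      Nat.choose_eq_zero_of_lt (show k + s - 1 - 2 * t < k - t by omega), mul_zero]

def visitSum (k s : ℕ) : ℕ :=
  ∑ j ∈ range s, (2 * j).choose j * (k + s - 1 - 2 * j).choose (k - j)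

theorem sum_visitsFromAbove_neg_one {k s : ℕ} (hks : s ≤ k) :
    ∑ q ∈ {q : Fin (k + s) → Bool | upSteps q = k}, visitsFromAbove q (-1) = visitSum k s := by
  have double_count := sum_card_bipartiteAbove_eq_sum_card_bipartiteBelow
    (s := {q : Fin (k + s) → Bool | upSteps q = k}) (t := Icc 1 (k + s))
    (r := fun q r => height q r = -1 ∧ height q (r - 1) = 0)
  simp only [bipartiteAbove, bipartiteBelow, filter_filter] at double_count
  change _ = ∑ r ∈ Icc 1 (k + s), #(visitingPaths (k + s) k r) at double_count
  have hodd_times : (range s).image (fun j => 2 * j + 1) ⊆ Icc 1 (k + s) := by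
    intro r hr
    simp only [mem_image, mem_range] at hr
    obtain ⟨j, hj, rfl⟩ := hr
    simp only [mem_Icc]
    omega
  simp only [visitsFromAbove, neg_add_cancel, double_count]
  rw [← sum_subset hodd_times fun r hr hr' => ?_, sum_image fun _ _ _ _ h => by omega, visitSum]
  · refine sum_congr rfl fun j hj => ?_
    rw [card_visitingPaths_two_mul_add_one (by simp at hj; omega) (by simp at hj; omega)]
  · refine card_visitingPaths_eq_zero hr fun j hj h => hr' ?_
    simp only [mem_image, mem_range]
    exact ⟨j, hj, h.symm⟩

def lowerBinomialSum (k s : ℕ) : ℕ :=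
  ∑ r ∈ range s, (k + s).choose r

theorem visitSum_succ_succ {k s : ℕ} (h : s ≤ k + 1) :
    visitSum (k + 1) (s + 1) = visitSum k (s + 1) + visitSum (k + 1) s := by
  have pascal : ∀ j ∈ range s,
      (2 * j).choose j * (k + 1 + (s + 1) - 1 - 2 * j).choose (k + 1 - j) =
        (2 * j).choose j * (k + (s + 1) - 1 - 2 * j).choose (k - j) +
          (2 * j).choose j * (k + 1 + s - 1 - 2 * j).choose (k + 1 - j) := by
    intro j hj
    have hj := mem_range.mp hj
    rw [← mul_add, show k + 1 + (s + 1) - 1 - 2 * j = (k + s - 2 * j) + 1 by omega,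
      show k + 1 - j = (k - j) + 1 by omega, Nat.choose_succ_succ']
    congr 3
    omega
  have last : k + 1 + (s + 1) - 1 - 2 * s = k + 1 - s ∧ k + (s + 1) - 1 - 2 * s = k - s := by omega
  simp only [visitSum, sum_range_succ _ s, sum_congr rfl pascal, sum_add_distrib, last.1, last.2,
    Nat.choose_self]
  ring

theorem visitSum_add_two (k : ℕ) :
    visitSum k (k + 2) = visitSum (k + 1) (k + 1) + (2 * k + 2).choose (k + 1) := by
  have symm : ∀ j ∈ range (k + 1),
      (2 * j).choose j * (k + (k + 2) - 1 - 2 * j).choose (k - j) =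
        (2 * j).choose j * (k + 1 + (k + 1) - 1 - 2 * j).choose (k + 1 - j) := by
    intro j hj
    have hj := mem_range.mp hj
    rw [Nat.choose_symm_of_eq_add (show k + (k + 2) - 1 - 2 * j = (k - j) + (k + 1 - j) by omega)]
    congr 2
    omega
  rw [visitSum, sum_range_succ, sum_congr rfl symm, visitSum,
    show k + (k + 2) - 1 - 2 * (k + 1) = 0 by omega, show 2 * (k + 1) = 2 * k + 2 by ring]
  simp

theorem lowerBinomialSum_succ_succ (k s : ℕ) :
    lowerBinomialSum (k + 1) (s + 1) = lowerBinomialSum k (s + 1) + lowerBinomialSum (k + 1) s := by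
  simp only [lowerBinomialSum, show k + 1 + (s + 1) = (k + s + 1) + 1 by ring,
    show k + (s + 1) = k + s + 1 by ring, show k + 1 + s = k + s + 1 by ring]
  rw [sum_range_succ', sum_range_succ' _ s]
  simp only [Nat.choose_succ_succ', sum_add_distrib, Nat.choose_zero_right]
  ring

theorem lowerBinomialSum_add_two (k : ℕ) :
    lowerBinomialSum k (k + 2) = lowerBinomialSum (k + 1) (k + 1) + (2 * k + 2).choose (k + 1) := by
  rw [lowerBinomialSum, lowerBinomialSum, show k + (k + 2) = k + 1 + (k + 1) by ring,
    sum_range_succ]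
  congr 2; ring

theorem visitSum_eq_lowerBinomialSum {k s : ℕ} (h : s ≤ k + 1) :
    visitSum k s = lowerBinomialSum k s := by
  induction k generalizing s with
  | zero =>
    interval_cases s <;> rfl
  | succ k ihk =>
    induction s with
    | zero => rfl
    | succ s ihs =>
      rw [visitSum_succ_succ (by omega), lowerBinomialSum_succ_succ]
      rcases Nat.lt_or_ge s (k + 1) with hs | hs
      · rw [ihk (by omega), ihs (by omega)]
      · obtain rfl : s = k + 1 := by omega
        rw [visitSum_add_two, lowerBinomialSum_add_two, ihs (by omega)]

/-- For `k ≥ s ≥ 0`, the expected number of visits to `−1` from above of a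
uniformly random lattice path with `k` upsteps and `s` downsteps (there are `C(k+s, s)`
such paths) equals `(1/C(k+s, s)) · ∑_{r=0}^{s−1} C(k+s, r)`. -/
theorem stmt_5 (k s : ℕ) (hks : s ≤ k) :
    (∑ q ∈ Finset.univ.filter (fun q : Fin (k + s) → Bool => upSteps q = k),
        (visitsFromAbove q (-1) : ℚ)) / ((k + s).choose s : ℚ) =
      (1 / ((k + s).choose s : ℚ)) * ∑ r ∈ Finset.range s, ((k + s).choose r : ℚ) := by
  have total := (sum_visitsFromAbove_neg_one hks).trans (visitSum_eq_lowerBinomialSum (by omega))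
  rw [one_div_mul_eq_div]
  congr 1
  exact_mod_cast total
end

section
/- The map sending a lattice path P (with k upsteps, s downsteps, k ≥ s, and 0 ≤ m ≤ k−s) to the path P′ obtained by reflecting the segment of P between its first and last visit to height m in the horizontal line y = m is an involution on the set of such paths, and P visits m from above exactly as many times as P′ visits m−1 from above. -/
/-- The first time (number of steps) at which the path `p` is at height `m`. -/
noncomputable def firstAt {n : ℕ} (p : Fin n → Bool) (m : ℤ) : ℕ :=
  sInf {r : ℕ | height p r = m}

/-- The last time `r ≤ n` at which the path `p` is at height `m`. -/
noncomputable def lastAt {n : ℕ} (p : Fin n → Bool) (m : ℤ) : ℕ :=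
  sSup {r : ℕ | r ≤ n ∧ height p r = m}

/-- Reflect the segment of the path between times `b` and `c` (negate each step whose
index lies in `[b, c)`). -/
def reflectSeg {n : ℕ} (p : Fin n → Bool) (b c : ℕ) : Fin n → Bool :=
  fun i => if b ≤ (i : ℕ) ∧ (i : ℕ) < c then !(p i) else p i

/-!
The path starts at height `0 ≤ m`, ends at height `k - s ≥ m` and moves by unit steps, so the
first and last visits `b ≤ c` to height `m` exist. Reflecting on `[b, c]` replaces the height
`h` by `2m - h` there and leaves it unchanged elsewhere, so the times at height `m` (hence `b`,
`c` and the number of upsteps) are preserved and the map is an involution. A visit of the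
reflected path to `m - 1` from above comes from height `m`, so it lies in `(b, c]` and is the
image of an upstep of `P` from `m` to `m + 1`; every visit of `P` to `m` from above also
happens by time `c`. On `[0, c]` the path starts and ends at height `≤ m`, so it crosses from
`m` to `m + 1` as often as back.
-/

open Finset

-- Zero past the end of the path, so that `height p r` is a sum over `range r` for every `r`.
def step {n : ℕ} (p : Fin n → Bool) (i : ℕ) : ℤ :=
  if h : i < n then (if p ⟨i, h⟩ then 1 else -1) else 0

section Height

variable {n : ℕ} (p : Fin n → Bool)

lemma height_eq_sum_range (r : ℕ) : height p r = ∑ i ∈ range r, step p i := by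
  have hstep (i : Fin n) : (if p i then (1 : ℤ) else -1) = step p i := by simp [step]
  rw [height, sum_filter]
  simp only [hstep]
  rw [Fin.sum_univ_eq_sum_range (fun i => if i < r then step p i else 0), ← sum_filter,
    ← sum_filter_of_ne (s := range r) (p := (· < n))
      fun i _ h => by_contra fun hi => h (by simp [step, hi])]
  congr 1
  ext i
  simp only [mem_filter, mem_range]
  omega

@[simp]
lemma height_zero : height p 0 = 0 := by
  simp [height_eq_sum_range]

lemma height_succ_s9 (r : ℕ) : height p (r + 1) = height p r + step p r := by
  rw [height_eq_sum_range, height_eq_sum_range, sum_range_succ]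

lemma height_succ_le (r : ℕ) : height p (r + 1) ≤ height p r + 1 := by
  rw [height_succ_s9]
  unfold step
  split_ifs <;> omega

lemma height_succ_eq_add_one_or_sub_one {r : ℕ} (hr : r < n) :
    height p (r + 1) = height p r + 1 ∨ height p (r + 1) = height p r - 1 := by
  rw [height_succ_s9]
  unfold step
  split_ifs <;> simp [sub_eq_add_neg]

lemma height_length : height p n = 2 * (upSteps p : ℤ) - n := by
  have hstep (i : Fin n) : (if p i then (1 : ℤ) else -1) = 2 * (if p i then 1 else 0) - 1 := by
    cases p i <;> simp
  rw [height, filter_true_of_mem fun i _ => i.isLt]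
  simp only [hstep, sum_sub_distrib, ← mul_sum, sum_boole, sum_const, card_univ, upSteps]
  simp

end Height

lemma exists_mem_Icc_eq_of_succ_le_add_one (f : ℕ → ℤ) (hf : ∀ i, f (i + 1) ≤ f i + 1)
    {a b : ℕ} (hab : a ≤ b) {m : ℤ} (ha : f a ≤ m) (hb : m ≤ f b) :
    ∃ r ∈ Icc a b, f r = m := by
  induction b, hab using Nat.le_induction with
  | base => exact ⟨a, by simp, le_antisymm ha hb⟩
  | succ b hab ih =>
    by_cases hmb : m ≤ f b
    · obtain ⟨r, hr, hfr⟩ := ih hmb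
      exact ⟨r, Icc_subset_Icc_right b.le_succ hr, hfr⟩
    · exact ⟨b + 1, by simp; omega, by have := hf b; omega⟩

section Reflection

variable {n : ℕ} (p : Fin n → Bool) {b c : ℕ}

lemma reflectSeg_reflectSeg (b c : ℕ) : reflectSeg (reflectSeg p b c) b c = p := by
  funext i
  by_cases hi : b ≤ (i : ℕ) ∧ (i : ℕ) < c <;> simp [reflectSeg, hi]

lemma height_reflectSeg (hbc : b ≤ c) (r : ℕ) :
    height (reflectSeg p b c) r = height p r - 2 * (height p (min r c) - height p (min r b)) := by
  have hstep (i : ℕ) : step (reflectSeg p b c) i =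
      step p i - if b ≤ i ∧ i < c then 2 * step p i else 0 := by
    unfold step reflectSeg
    split_ifs <;> simp_all
  have hseg :
      (range r).filter (fun i => b ≤ i ∧ i < c) = range (min r c) \ range (min r b) := by
    ext i
    simp only [mem_filter, mem_range, mem_sdiff]
    omega
  simp only [height_eq_sum_range, hstep, sum_sub_distrib]
  rw [← sum_filter, hseg, sum_sdiff_eq_sub (range_subset_range.mpr (by omega)), ← mul_sum,
    ← mul_sum]
  ring

variable {p} {m : ℤ}

lemma height_reflectSeg_of_le_left (hbc : b ≤ c) {r : ℕ} (hrb : r ≤ b) :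
    height (reflectSeg p b c) r = height p r := by
  rw [height_reflectSeg p hbc, min_eq_left (hrb.trans hbc), min_eq_left hrb]
  ring

lemma height_reflectSeg_of_mem (hb : height p b = m) (hbc : b ≤ c) {r : ℕ} (hbr : b ≤ r)
    (hrc : r ≤ c) : height (reflectSeg p b c) r = 2 * m - height p r := by
  rw [height_reflectSeg p hbc, min_eq_left hrc, min_eq_right hbr, hb]
  ring

lemma height_reflectSeg_of_right_le (hb : height p b = m) (hc : height p c = m) (hbc : b ≤ c)
    {r : ℕ} (hcr : c ≤ r) : height (reflectSeg p b c) r = height p r := by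
  rw [height_reflectSeg p hbc, min_eq_right hcr, min_eq_right (hbc.trans hcr), hb, hc]
  ring

lemma height_reflectSeg_eq_iff (hb : height p b = m) (hc : height p c = m) (hbc : b ≤ c)
    (r : ℕ) : height (reflectSeg p b c) r = m ↔ height p r = m := by
  rcases le_total r b with hrb | hbr
  · rw [height_reflectSeg_of_le_left hbc hrb]
  rcases le_total r c with hrc | hcr
  · rw [height_reflectSeg_of_mem hb hbc hbr hrc]
    omega
  · rw [height_reflectSeg_of_right_le hb hc hbc hcr]

lemma firstAt_reflectSeg (hb : height p b = m) (hc : height p c = m) (hbc : b ≤ c) :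
    firstAt (reflectSeg p b c) m = firstAt p m := by
  simp only [firstAt, height_reflectSeg_eq_iff hb hc hbc]

lemma lastAt_reflectSeg (hb : height p b = m) (hc : height p c = m) (hbc : b ≤ c) :
    lastAt (reflectSeg p b c) m = lastAt p m := by
  simp only [lastAt, height_reflectSeg_eq_iff hb hc hbc]

lemma upSteps_reflectSeg (hbc : b ≤ c) (hcn : c ≤ n) (hpbc : height p b = height p c) :
    upSteps (reflectSeg p b c) = upSteps p := by
  have h := height_reflectSeg p hbc n
  rw [min_eq_right hcn, min_eq_right (hbc.trans hcn), hpbc, sub_self, mul_zero, sub_zero,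
    height_length, height_length] at h
  omega

end Reflection

section FirstLast

variable {n : ℕ} {p : Fin n → Bool} {m : ℤ}

lemma firstAt_le {r : ℕ} (hr : height p r = m) : firstAt p m ≤ r :=
  Nat.sInf_le hr

lemma lastAt_le_length (p : Fin n → Bool) (m : ℤ) : lastAt p m ≤ n :=
  csSup_le' fun _ hr => hr.1

lemma le_lastAt {r : ℕ} (hrn : r ≤ n) (hr : height p r = m) : r ≤ lastAt p m :=
  le_csSup ⟨n, fun _ hr => hr.1⟩ ⟨hrn, hr⟩

lemma exists_height_eq (hm0 : 0 ≤ m) (hmn : m ≤ height p n) : ∃ r ≤ n, height p r = m := by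
  obtain ⟨r, hr, hpr⟩ := exists_mem_Icc_eq_of_succ_le_add_one (height p) (height_succ_le p)
    n.zero_le (by simpa using hm0) hmn
  exact ⟨r, (mem_Icc.1 hr).2, hpr⟩

lemma height_firstAt (hm0 : 0 ≤ m) (hmn : m ≤ height p n) : height p (firstAt p m) = m := by
  obtain ⟨r, -, hr⟩ := exists_height_eq hm0 hmn
  exact Nat.sInf_mem (s := {r | height p r = m}) ⟨r, hr⟩

lemma height_lastAt (hm0 : 0 ≤ m) (hmn : m ≤ height p n) : height p (lastAt p m) = m := by
  obtain ⟨r, hrn, hr⟩ := exists_height_eq hm0 hmn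
  exact (Nat.sSup_mem (s := {r | r ≤ n ∧ height p r = m}) ⟨r, hrn, hr⟩
    ⟨n, fun _ h => h.1⟩).2

lemma firstAt_le_lastAt (hm0 : 0 ≤ m) (hmn : m ≤ height p n) : firstAt p m ≤ lastAt p m :=
  firstAt_le (height_lastAt hm0 hmn)

lemma lt_height_of_lastAt_lt (hmn : m ≤ height p n) {r : ℕ} (hcr : lastAt p m < r)
    (hrn : r ≤ n) : m < height p r := by
  by_contra! hrm
  obtain ⟨t, ht, hpt⟩ :=
    exists_mem_Icc_eq_of_succ_le_add_one (height p) (height_succ_le p) hrn hrm hmn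
  have := le_lastAt (mem_Icc.1 ht).2 hpt
  have := (mem_Icc.1 ht).1
  omega

end FirstLast

def downCrossings (f : ℕ → ℤ) (m : ℤ) (c : ℕ) : Finset ℕ :=
  (range c).filter fun i => f (i + 1) = m ∧ f i = m + 1

def upCrossings (f : ℕ → ℤ) (m : ℤ) (c : ℕ) : Finset ℕ :=
  (range c).filter fun i => f (i + 1) = m + 1 ∧ f i = m

lemma card_downCrossings_eq_card_upCrossings (f : ℕ → ℤ) (m : ℤ) (c : ℕ)
    (hf : ∀ i < c, f (i + 1) = f i + 1 ∨ f (i + 1) = f i - 1) (h0 : f 0 ≤ m)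
    (hc : f c ≤ m) :
    #(downCrossings f m c) = #(upCrossings f m c) := by
  -- `above` changes exactly at the crossings, and is `0` at both ends.
  let above (i : ℕ) : ℤ := if m + 1 ≤ f i then 1 else 0
  have hterm (i) (hi : i ∈ range c) : above (i + 1) - above i =
      (if f (i + 1) = m + 1 ∧ f i = m then 1 else 0) -
        (if f (i + 1) = m ∧ f i = m + 1 then 1 else 0) := by
    have := hf i (mem_range.1 hi)
    simp only [above]
    split_ifs <;> omega
  have htele := sum_range_sub above c
  simp only [above, if_neg (show ¬m + 1 ≤ f 0 by omega), if_neg (show ¬m + 1 ≤ f c by omega),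
    sum_congr rfl hterm, sum_sub_distrib, sum_boole] at htele
  simp only [downCrossings, upCrossings]
  omega

lemma visitsFromAbove_eq_card_downCrossings {n : ℕ} (p : Fin n → Bool) (m : ℤ) :
    visitsFromAbove p m = #(downCrossings (height p) m n) := by
  rw [visitsFromAbove, ← Ico_add_one_right_eq_Icc, ← zero_add 1, ← map_add_right_Ico,
    ← range_eq_Ico, filter_map, card_map]
  rfl

lemma downCrossings_height_eq_lastAt {n : ℕ} (p : Fin n → Bool) (m : ℤ) :
    downCrossings (height p) m n = downCrossings (height p) m (lastAt p m) := by
  ext i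
  simp only [downCrossings, mem_filter, mem_range]
  have := lastAt_le_length p m
  constructor
  · rintro ⟨hin, hi, hi'⟩
    exact ⟨le_lastAt hin hi, hi, hi'⟩
  · rintro ⟨hic, hi⟩
    exact ⟨by omega, hi⟩

lemma downCrossings_height_reflectSeg {n : ℕ} {p : Fin n → Bool} {m : ℤ} (hm0 : 0 ≤ m)
    (hmn : m ≤ height p n) :
    downCrossings (height (reflectSeg p (firstAt p m) (lastAt p m))) (m - 1) n =
      upCrossings (height p) m (lastAt p m) := by
  have hb := height_firstAt hm0 hmn
  have hc := height_lastAt hm0 hmn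
  have hbc := firstAt_le_lastAt hm0 hmn
  have hcn := lastAt_le_length p m
  ext i
  simp only [downCrossings, upCrossings, mem_filter, mem_range, sub_add_cancel,
    height_reflectSeg_eq_iff hb hc hbc]
  constructor
  · rintro ⟨hin, hi1, hi⟩
    have hbi := firstAt_le hi
    have hic : i + 1 ≤ lastAt p m := by
      by_contra! hci
      rw [height_reflectSeg_of_right_le hb hc hbc hci.le] at hi1
      have := lt_height_of_lastAt_lt hmn hci hin
      omega
    rw [height_reflectSeg_of_mem hb hbc (by omega) hic] at hi1
    exact ⟨hic, by omega, hi⟩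
  · rintro ⟨hic, hi1, hi⟩
    rw [height_reflectSeg_of_mem hb hbc (by have := firstAt_le hi; omega) hic, hi1]
    exact ⟨by omega, by ring, hi⟩

theorem stmt_9_general (k s : ℕ) (m : ℤ) (hm0 : 0 ≤ m) (hm : m ≤ (k : ℤ) - s)
    (p : Fin (k + s) → Bool) (hp : upSteps p = k) :
    upSteps (reflectSeg p (firstAt p m) (lastAt p m)) = k ∧
    reflectSeg (reflectSeg p (firstAt p m) (lastAt p m))
        (firstAt (reflectSeg p (firstAt p m) (lastAt p m)) m)
        (lastAt (reflectSeg p (firstAt p m) (lastAt p m)) m) = p ∧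
    visitsFromAbove p m =
      visitsFromAbove (reflectSeg p (firstAt p m) (lastAt p m)) (m - 1) := by
  have hmn : m ≤ height p (k + s) := by
    rw [height_length, hp]
    push_cast
    linarith
  have hb := height_firstAt hm0 hmn
  have hc := height_lastAt hm0 hmn
  have hbc := firstAt_le_lastAt hm0 hmn
  refine ⟨?_, ?_, ?_⟩
  · rw [upSteps_reflectSeg hbc (lastAt_le_length p m) (hb.trans hc.symm), hp]
  · rw [firstAt_reflectSeg hb hc hbc, lastAt_reflectSeg hb hc hbc, reflectSeg_reflectSeg]
  · rw [visitsFromAbove_eq_card_downCrossings, visitsFromAbove_eq_card_downCrossings,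
      downCrossings_height_reflectSeg hm0 hmn, downCrossings_height_eq_lastAt]
    exact card_downCrossings_eq_card_upCrossings (height p) m _
      (fun i hi => height_succ_eq_add_one_or_sub_one p (hi.trans_le (lastAt_le_length p m)))
      (by simpa using hm0) hc.le

/-- For `k ≥ s` and `0 ≤ m ≤ k − s`, the map sending a lattice path `P`
with `k` upsteps and `s` downsteps to the path `P′` obtained by reflecting the segment
of `P` between its first and last visit to height `m` in the line `y = m` is an
involution on the set of such paths, and `P` visits `m` from above exactly as many
times as `P′` visits `m − 1` from above. -/
theorem stmt_9 (k s : ℕ) (hks : s ≤ k) (m : ℤ) (hm0 : 0 ≤ m) (hm : m ≤ (k : ℤ) - s)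
    (p : Fin (k + s) → Bool) (hp : upSteps p = k) :
    upSteps (reflectSeg p (firstAt p m) (lastAt p m)) = k ∧
    reflectSeg (reflectSeg p (firstAt p m) (lastAt p m))
        (firstAt (reflectSeg p (firstAt p m) (lastAt p m)) m)
        (lastAt (reflectSeg p (firstAt p m) (lastAt p m)) m) = p ∧
    visitsFromAbove p m =
      visitsFromAbove (reflectSeg p (firstAt p m) (lastAt p m)) (m - 1) :=
  stmt_9_general k s m hm0 hm p hp
end
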